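/- Let Θ = ({D_g},{θ_g}) be a partial action of the free group 𝔽 on a C*-algebra A. The grading B_g = D_g δ_g of A ⋊ 𝔽 is semi-saturated if and only if D_{gh} ⊆ D_g whenever |gh| = |g| + |h|, and orthogonal if and only if D_x ∩ D_y = {0} for all distinct generators x, y. -/

import Mathlib

/-! The closed span of the coefficients `θ_g(θ_{g⁻¹}(a) b)` of `B_g B_h` is always
`D_g ∩ D_{gh}`. The inclusion `⊆` is the domain condition `θ_g(D_{g⁻¹} ∩ D_h) = D_g ∩ D_{gh}`.
For `⊇`, write a point of `D_g ∩ D_{gh}` as `θ_g e` with `e ∈ D_{g⁻¹} ∩ D_h`; in any C⋆-algebra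
`e` is the limit of `e (e⋆e) (e⋆e + δ)⁻¹` as `δ → 0`, and `(e⋆e)(e⋆e + δ)⁻¹ ∈ D_h`, so the
isometry `θ_g` carries these approximants to coefficients of `B_g B_h`. Hence semi-saturation
says exactly `D_{gh} ⊆ D_g`. Orthogonality reduces, again because `θ_{x⁻¹}` is isometric, to
`a⋆b = 0` for `a ∈ D_x`, `b ∈ D_y`, which by `‖a⋆a‖ = ‖a‖²` means `D_x ∩ D_y = 0`. -/

lemma IsSelfAdjoint.smul_le_add_algebraMap_mul_self {A : Type*} [Ring A] [StarRing A]
    [PartialOrder A] [StarOrderedRing A] [Algebra ℝ A] [StarModule ℝ A] {y : A}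
    (hy : IsSelfAdjoint y) (δ : ℝ) :
    (4 * δ) • y ≤ (y + algebraMap ℝ A δ) * (y + algebraMap ℝ A δ) := by
  have hsq : (y + algebraMap ℝ A δ) * (y + algebraMap ℝ A δ) - (4 * δ) • y =
      star (y - algebraMap ℝ A δ) * (y - algebraMap ℝ A δ) := by
    rw [(hy.sub (.algebraMap A (.all δ))).star_eq]
    simp only [Algebra.algebraMap_eq_smul_one, add_mul, mul_add, sub_mul, mul_sub,
      smul_mul_assoc, mul_smul_comm, one_mul, mul_one]
    module
  rw [← sub_nonneg, hsq]
  exact star_mul_self_nonneg _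

section Approximation

variable {A : Type*} [CStarAlgebra A]

lemma CStarRing.norm_mul_ringInverse_star_mul_self_add_algebraMap_sq_le (d : A) {δ : ℝ}
    (hδ : 0 < δ) :
    ‖d * Ring.inverse (star d * d + algebraMap ℝ A δ)‖ ^ 2 ≤ (4 * δ)⁻¹ := by
  let _ : PartialOrder A := CStarAlgebra.spectralOrder A
  have _ : StarOrderedRing A := CStarAlgebra.spectralOrderedRing A
  set u := star d * d + algebraMap ℝ A δ
  set v := Ring.inverse u
  have hu : IsStrictlyPositive u :=
    (isStrictlyPositive_algebraMap hδ).nonneg_add (star_mul_self_nonneg d)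
  have hconj : star v * (u * u) * v = 1 := by
    nth_rw 1 [← hu.isSelfAdjoint.star_eq]
    rw [mul_assoc, ← mul_assoc, ← mul_assoc, ← star_mul, mul_assoc,
      Ring.mul_inverse_cancel u hu.isUnit, star_one, one_mul]
  have hle : star v * (star d * d) * v ≤ algebraMap ℝ A (4 * δ)⁻¹ :=
    calc star v * (star d * d) * v = (4 * δ)⁻¹ • (star v * ((4 * δ) • (star d * d)) * v) := by
          rw [mul_smul_comm, smul_mul_assoc, inv_smul_smul₀ (by positivity)]
      _ ≤ (4 * δ)⁻¹ • (star v * (u * u) * v) := by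
          gcongr
          exact star_left_conjugate_le_conjugate
            ((IsSelfAdjoint.star_mul_self d).smul_le_add_algebraMap_mul_self δ) v
      _ = algebraMap ℝ A (4 * δ)⁻¹ := by rw [hconj, Algebra.algebraMap_eq_smul_one]
  rw [sq, ← CStarRing.norm_star_mul_self, star_mul, mul_assoc, ← mul_assoc (star d), ← mul_assoc]
  exact (CStarAlgebra.norm_le_iff_le_algebraMap _ (by positivity)
    (star_left_conjugate_nonneg (star_mul_self_nonneg d) v)).mpr hle

lemma CStarRing.norm_sub_mul_star_mul_self_mul_ringInverse_sq_le (d : A) {δ : ℝ} (hδ : 0 < δ) :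
    ‖d - d * (star d * d * Ring.inverse (star d * d + algebraMap ℝ A δ))‖ ^ 2 ≤ δ / 4 := by
  set u := star d * d + algebraMap ℝ A δ
  have hu : IsUnit u := by
    let _ : PartialOrder A := CStarAlgebra.spectralOrder A
    have _ : StarOrderedRing A := CStarAlgebra.spectralOrderedRing A
    exact ((isStrictlyPositive_algebraMap hδ).nonneg_add (star_mul_self_nonneg d)).isUnit
  have hdiff : d - d * (star d * d * Ring.inverse u) = δ • (d * Ring.inverse u) := by
    calc d - d * (star d * d * Ring.inverse u)
        = d * ((u - star d * d) * Ring.inverse u) := by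
          rw [sub_mul, Ring.mul_inverse_cancel u hu, mul_sub, mul_one]
      _ = δ • (d * Ring.inverse u) := by
          rw [add_sub_cancel_left, ← Algebra.smul_def, mul_smul_comm]
  calc ‖d - d * (star d * d * Ring.inverse u)‖ ^ 2
      = δ ^ 2 * ‖d * Ring.inverse u‖ ^ 2 := by
        rw [hdiff, norm_smul, Real.norm_of_nonneg hδ.le, mul_pow]
    _ ≤ δ ^ 2 * (4 * δ)⁻¹ := by
        gcongr
        exact norm_mul_ringInverse_star_mul_self_add_algebraMap_sq_le d hδ
    _ = δ / 4 := by field_simp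

theorem CStarRing.mem_closure_range_mul_star_mul_self_mul (d : A) :
    d ∈ closure (Set.range fun c => d * (star d * d * c)) := by
  refine Metric.mem_closure_iff.mpr fun ε hε =>
    ⟨_, ⟨Ring.inverse (star d * d + algebraMap ℝ A (ε ^ 2)), rfl⟩, ?_⟩
  refine lt_of_pow_lt_pow_left₀ 2 hε.le ?_
  rw [dist_eq_norm]
  calc _ ≤ ε ^ 2 / 4 := norm_sub_mul_star_mul_self_mul_ringInverse_sq_le d (by positivity)
    _ < ε ^ 2 := by linarith [pow_pos hε 2]

end Approximation

theorem CStarRing.inf_eq_bot_iff_star_mul_eq_zero {R A : Type*} [Semiring R]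
    [NonUnitalNormedRing A] [StarRing A] [CStarRing A] [Module R A] {I J : Submodule R A}
    (hIstar : ∀ a ∈ I, star a ∈ I) (hI : ∀ a ∈ I, ∀ c, a * c ∈ I)
    (hJ : ∀ b ∈ J, ∀ c, c * b ∈ J) :
    I ⊓ J = ⊥ ↔ ∀ a ∈ I, ∀ b ∈ J, star a * b = 0 := by
  refine ⟨fun h a ha b hb => ?_, fun h => eq_bot_iff.mpr fun a ⟨haI, haJ⟩ => ?_⟩
  · rw [← Submodule.mem_bot R, ← h]
    exact ⟨hI _ (hIstar a ha) b, hJ b hb _⟩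
  · exact (Submodule.mem_bot R).mpr ((star_mul_self_eq_zero_iff a).mp (h a haI a haJ))

namespace PartialAction

section

variable {G R A : Type*} [Group G] [Semiring R] [Ring A] [Module R A]
  {D : G → Submodule R A} {θ : G → A →ₗ[R] A}

lemma apply_inv_apply_of_mem (hDe : D 1 = ⊤) (hθe : ∀ a, θ 1 a = a)
    (hθcomp : ∀ g h, ∀ a, a ∈ D h⁻¹ → a ∈ D (h⁻¹ * g⁻¹) → θ g (θ h a) = θ (g * h) a)
    {g : G} {a : A} (ha : a ∈ D g⁻¹) : θ g⁻¹ (θ g a) = a := by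
  rw [hθcomp g⁻¹ g a ha (by simp [hDe]), inv_mul_cancel, hθe]

lemma apply_apply_inv_mul_mem_inf
    (hDideal : ∀ g, ∀ a : A, ∀ d ∈ D g, a * d ∈ D g ∧ d * a ∈ D g)
    (hθmap : ∀ g, ∀ a ∈ D g⁻¹, θ g a ∈ D g)
    (hθdom : ∀ g h, (D g⁻¹ ⊓ D h).map (θ g) = D g ⊓ D (g * h))
    {g h : G} {a b : A} (ha : a ∈ D g) (hb : b ∈ D h) :
    θ g (θ g⁻¹ a * b) ∈ D g ⊓ D (g * h) := by
  have ha' : θ g⁻¹ a ∈ D g⁻¹ := hθmap g⁻¹ a (by rwa [inv_inv])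
  rw [← hθdom]
  exact Submodule.mem_map_of_mem ⟨(hDideal _ b _ ha').2, (hDideal _ _ b hb).1⟩

end

theorem topologicalClosure_span_eq_inf {G A : Type*} [Group G] [CStarAlgebra A]
    {D : G → Submodule ℂ A} {θ : G → A →ₗ[ℂ] A}
    (hDclosed : ∀ g, IsClosed (D g : Set A))
    (hDideal : ∀ g, ∀ a : A, ∀ d ∈ D g, a * d ∈ D g ∧ d * a ∈ D g)
    (hDe : D 1 = ⊤) (hθe : ∀ a, θ 1 a = a)
    (hθmap : ∀ g, ∀ a ∈ D g⁻¹, θ g a ∈ D g)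
    (hθiso : ∀ g, ∀ a ∈ D g⁻¹, ‖θ g a‖ = ‖a‖)
    (hθdom : ∀ g h, (D g⁻¹ ⊓ D h).map (θ g) = D g ⊓ D (g * h))
    (hθcomp : ∀ g h, ∀ a, a ∈ D h⁻¹ → a ∈ D (h⁻¹ * g⁻¹) → θ g (θ h a) = θ (g * h) a)
    (g h : G) :
    (Submodule.span ℂ {c : A | ∃ a ∈ D g, ∃ b ∈ D h, c = θ g (θ g⁻¹ a * b)}).topologicalClosure =
      D g ⊓ D (g * h) := by
  set S := Submodule.span ℂ {c : A | ∃ a ∈ D g, ∃ b ∈ D h, c = θ g (θ g⁻¹ a * b)}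
  refine le_antisymm ?_ ?_
  · refine S.topologicalClosure_minimal (Submodule.span_le.mpr ?_)
      ((hDclosed g).inter (hDclosed (g * h)))
    rintro c ⟨a, ha, b, hb, rfl⟩
    exact apply_apply_inv_mul_mem_inf hDideal hθmap hθdom ha hb
  rw [← hθdom]
  rintro _ ⟨e, ⟨heg, heh⟩, rfl⟩
  have hlip : LipschitzOnWith 1 (θ g) (D g⁻¹) :=
    LipschitzOnWith.of_dist_le_mul fun a ha b hb => by
      rw [dist_eq_norm, dist_eq_norm, ← map_sub, hθiso g _ (sub_mem ha hb), NNReal.coe_one, one_mul]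
  set P := Set.range fun c => e * (star e * e * c)
  have hP : P ⊆ D g⁻¹ := by
    rintro _ ⟨c, rfl⟩
    exact (hDideal _ _ e heg).2
  have hPS : θ g '' P ⊆ S := by
    rintro _ ⟨_, ⟨c, rfl⟩, rfl⟩
    refine Submodule.subset_span ⟨θ g e, hθmap g e heg, star e * e * c, ?_, ?_⟩
    · exact (hDideal _ _ _ ((hDideal _ (star e) e heh).1)).2
    · rw [apply_inv_apply_of_mem hDe hθe hθcomp heg]
  have hcl : closure P ⊆ D g⁻¹ := closure_minimal hP (hDclosed _)
  have hmem : θ g e ∈ closure (θ g '' P) := (hlip.continuousOn.mono hcl).image_closure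
    (Set.mem_image_of_mem _ (CStarRing.mem_closure_range_mul_star_mul_self_mul e))
  rw [← SetLike.mem_coe, Submodule.topologicalClosure_coe]
  exact closure_mono hPS hmem

end PartialAction

theorem stmt_8_general {𝒢 : Type*} [DecidableEq 𝒢] {A : Type*} [NormedRing A] [StarRing A]
    [CStarRing A] [NormedAlgebra ℂ A] [CompleteSpace A] [StarModule ℂ A]
    (D : FreeGroup 𝒢 → Submodule ℂ A)
    (hDclosed : ∀ g, IsClosed (D g : Set A))
    (hDideal : ∀ g, ∀ a : A, ∀ d ∈ D g, a * d ∈ D g ∧ d * a ∈ D g)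
    (hDstar : ∀ g, ∀ d ∈ D g, star d ∈ D g)
    (hDe : D 1 = ⊤)
    (θ : FreeGroup 𝒢 → A →ₗ[ℂ] A)
    (hθe : ∀ a, θ 1 a = a)
    (hθmap : ∀ g, ∀ a ∈ D g⁻¹, θ g a ∈ D g)
    (hθiso : ∀ g, ∀ a ∈ D g⁻¹, ‖θ g a‖ = ‖a‖)
    (hθdom : ∀ g h, (D g⁻¹ ⊓ D h).map (θ g) = D g ⊓ D (g * h))
    (hθcomp : ∀ g h, ∀ a, a ∈ D h⁻¹ → a ∈ D (h⁻¹ * g⁻¹) → θ g (θ h a) = θ (g * h) a) :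
    -- semi-saturated ↔ D decreasing along length-additive products
    ((∀ g h : FreeGroup 𝒢,
        (g * h).toWord.length = g.toWord.length + h.toWord.length →
        (Submodule.span ℂ {c : A | ∃ a ∈ D g, ∃ b ∈ D h,
            c = θ g (θ g⁻¹ a * b)}).topologicalClosure = D (g * h))
      ↔ (∀ g h : FreeGroup 𝒢,
          (g * h).toWord.length = g.toWord.length + h.toWord.length →
          D (g * h) ≤ D g)) ∧
    -- orthogonal ↔ the ideals of distinct generators intersect trivially
    ((∀ x y : 𝒢, x ≠ y → ∀ a ∈ D (FreeGroup.of x), ∀ b ∈ D (FreeGroup.of y),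
        θ (FreeGroup.of x)⁻¹ (star a * b) = 0)
      ↔ (∀ x y : 𝒢, x ≠ y → D (FreeGroup.of x) ⊓ D (FreeGroup.of y) = ⊥)) := by
  let _ : CStarAlgebra A := { }
  refine ⟨forall₂_congr fun g h => imp_congr_right fun _ => ?_,
    forall₂_congr fun x y => imp_congr_right fun _ => ?_⟩
  · rw [PartialAction.topologicalClosure_span_eq_inf hDclosed hDideal hDe hθe hθmap hθiso hθdom
      hθcomp, inf_eq_right]
  · rw [CStarRing.inf_eq_bot_iff_star_mul_eq_zero (hDstar _) (fun a ha c => (hDideal _ c a ha).2)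
      (fun b hb c => (hDideal _ c b hb).1)]
    refine forall₂_congr fun a ha => forall₂_congr fun b hb => ?_
    have hab : star a * b ∈ D (FreeGroup.of x)⁻¹⁻¹ := by
      rw [inv_inv]
      exact (hDideal _ b _ (hDstar _ a ha)).2
    rw [← norm_eq_zero, hθiso _ _ hab, norm_eq_zero]

/-- Let `Θ = ({D_g},{θ_g})` be a partial action of the free group `𝔽` on a
C*-algebra `A`.  Since `B_g B_h = θ_g(D_{g⁻¹} D_h) δ_{gh}` in the crossed product, the
grading `B_g = D_g δ_g` of `A ⋊ 𝔽` is semi-saturated — the closed span of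
`{θ_g(θ_{g⁻¹}(a) b) : a ∈ D_g, b ∈ D_h}` equals `D_{gh}` whenever `|gh| = |g| + |h|` —
if and only if `D_{gh} ⊆ D_g` whenever `|gh| = |g| + |h|`; and it is orthogonal —
`B_x* B_y = {θ_{x⁻¹}(a* b) δ_{x⁻¹ y} : a ∈ D_x, b ∈ D_y} = {0}` for distinct generators
`x ≠ y` — if and only if `D_x ∩ D_y = {0}` for all distinct generators `x, y`. -/
theorem stmt_8 {𝒢 : Type*} [DecidableEq 𝒢] {A : Type*} [NormedRing A] [StarRing A]
    [CStarRing A] [NormedAlgebra ℂ A] [CompleteSpace A] [StarModule ℂ A]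
    (D : FreeGroup 𝒢 → Submodule ℂ A)
    (hDclosed : ∀ g, IsClosed (D g : Set A))
    (hDideal : ∀ g, ∀ a : A, ∀ d ∈ D g, a * d ∈ D g ∧ d * a ∈ D g)
    (hDstar : ∀ g, ∀ d ∈ D g, star d ∈ D g)
    (hDe : D 1 = ⊤)
    (θ : FreeGroup 𝒢 → A →ₗ[ℂ] A)
    (hθe : ∀ a, θ 1 a = a)
    (hθmap : ∀ g, ∀ a ∈ D g⁻¹, θ g a ∈ D g)
    (hθmul : ∀ g, ∀ a ∈ D g⁻¹, ∀ b ∈ D g⁻¹, θ g (a * b) = θ g a * θ g b)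
    (hθstar : ∀ g, ∀ a ∈ D g⁻¹, θ g (star a) = star (θ g a))
    (hθiso : ∀ g, ∀ a ∈ D g⁻¹, ‖θ g a‖ = ‖a‖)
    (hθdom : ∀ g h, (D g⁻¹ ⊓ D h).map (θ g) = D g ⊓ D (g * h))
    (hθcomp : ∀ g h, ∀ a, a ∈ D h⁻¹ → a ∈ D (h⁻¹ * g⁻¹) → θ g (θ h a) = θ (g * h) a) :
    -- semi-saturated ↔ D decreasing along length-additive products
    ((∀ g h : FreeGroup 𝒢,
        (g * h).toWord.length = g.toWord.length + h.toWord.length →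
        (Submodule.span ℂ {c : A | ∃ a ∈ D g, ∃ b ∈ D h,
            c = θ g (θ g⁻¹ a * b)}).topologicalClosure = D (g * h))
      ↔ (∀ g h : FreeGroup 𝒢,
          (g * h).toWord.length = g.toWord.length + h.toWord.length →
          D (g * h) ≤ D g)) ∧
    -- orthogonal ↔ the ideals of distinct generators intersect trivially
    ((∀ x y : 𝒢, x ≠ y → ∀ a ∈ D (FreeGroup.of x), ∀ b ∈ D (FreeGroup.of y),
        θ (FreeGroup.of x)⁻¹ (star a * b) = 0)
      ↔ (∀ x y : 𝒢, x ≠ y → D (FreeGroup.of x) ⊓ D (FreeGroup.of y) = ⊥)) :=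
  stmt_8_general D hDclosed hDideal hDstar hDe θ hθe hθmap hθiso hθdom hθcomp
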